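/- (Necessary condition for ballistic capture.) Assume 0 < r_f < 1 and r_f³ ≤ 2μ, and let α ∈ ℝ and V ≥ 0. If the Keplerian energy with respect to the Moon of the direct insertion state D(α,V) satisfies E ≤ 0, then its Jacobi energy C = W(α) − V² satisfies C ≥ 3(1−μ) − (1−μ)·r_f² + 2√(2μ·r_f). If the Keplerian energy with respect to the Moon of the retrograde insertion state R(α,V) satisfies E ≤ 0, then its Jacobi energy C = W(α) − V² satisfies C ≥ 3(1−μ) − (1−μ)·r_f² − 2√(2μ·r_f). -/

import Mathlib

/-- Keplerian energy with respect to the Moon. -/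
noncomputable def kepE (μ x y u v : ℝ) : ℝ :=
  (1 / 2) * ((u - y) ^ 2 + (v + x + μ - 1) ^ 2)
    - μ / Real.sqrt ((x + μ - 1) ^ 2 + y ^ 2)

/-- The function W(α). -/
noncomputable def Wfun (μ rf α : ℝ) : ℝ :=
  (rf * Real.cos α + 1 - μ) ^ 2 + (rf * Real.sin α) ^ 2
    + 2 * (1 - μ) / Real.sqrt (1 + 2 * rf * Real.cos α + rf ^ 2)
    + 2 * μ / rf + μ * (1 - μ)

private lemma le_of_sq_le_sq'' (a b : ℝ) (hb : 0 ≤ b) (h : a ^ 2 ≤ b ^ 2) : a ≤ b := by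
  calc a ≤ |a| := le_abs_self a
    _ = Real.sqrt (a ^ 2) := (Real.sqrt_sq_eq_abs a).symm
    _ ≤ Real.sqrt (b ^ 2) := Real.sqrt_le_sqrt h
    _ = b := Real.sqrt_sq hb

private lemma aux_main (μ rf c s d S V e : ℝ) (hμ1 : μ ≤ 1) (hd0 : 0 < d)
    (hcs : s ^ 2 + c ^ 2 = 1)
    (hdsq : d ^ 2 = 1 + 2 * rf * c + rf ^ 2)
    (hS2 : S ^ 2 = 2 * μ / rf)
    (hv2 : V ^ 2 ≤ S ^ 2 - 2 * e * rf * S + rf ^ 2) :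
    3 * (1 - μ) - (1 - μ) * rf ^ 2 + 2 * e * (rf * S)
      ≤ (rf * c + 1 - μ) ^ 2 + (rf * s) ^ 2 + 2 * (1 - μ) / d
        + 2 * μ / rf + μ * (1 - μ) - V ^ 2 := by
  have h3 : (3 - d ^ 2) * d ≤ 2 := by
    nlinarith [mul_nonneg (sq_nonneg (d - 1)) (by linarith : (0:ℝ) ≤ d + 2)]
  have h4 : 3 - d ^ 2 ≤ 2 / d := (le_div_iff₀ hd0).2 h3
  have hkey : (1 - μ) * (2 - 2 * rf * c - rf ^ 2) ≤ 2 * (1 - μ) / d := by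
    have h5 : (1 - μ) * (3 - d ^ 2) ≤ (1 - μ) * (2 / d) :=
      mul_le_mul_of_nonneg_left h4 (by linarith)
    calc (1 - μ) * (2 - 2 * rf * c - rf ^ 2) = (1 - μ) * (3 - d ^ 2) := by
          rw [hdsq]; ring
      _ ≤ (1 - μ) * (2 / d) := h5
      _ = 2 * (1 - μ) / d := by ring
  rw [← hS2]
  rw [show (rf * c + 1 - μ) ^ 2 + (rf * s) ^ 2
      = rf ^ 2 + 2 * rf * c * (1 - μ) + (1 - μ) ^ 2 from by
    linear_combination rf ^ 2 * hcs]
  linarith [hkey, hv2]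

/-- Necessary condition for ballistic capture. -/
theorem necessary_condition_for_ballistic_capture
    (μ rf : ℝ) (hμ0 : 0 < μ) (hμ1 : μ < 1) (hrf0 : 0 < rf) (hrf1 : rf < 1)
    (hrf3 : rf ^ 3 ≤ 2 * μ) (α V : ℝ) (hV : 0 ≤ V) :
    (kepE μ (rf * Real.cos α + 1 - μ) (rf * Real.sin α)
        (-V * Real.sin α) (V * Real.cos α) ≤ 0 →
      3 * (1 - μ) - (1 - μ) * rf ^ 2 + 2 * Real.sqrt (2 * μ * rf)
        ≤ Wfun μ rf α - V ^ 2)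
    ∧
    (kepE μ (rf * Real.cos α + 1 - μ) (rf * Real.sin α)
        (V * Real.sin α) (-V * Real.cos α) ≤ 0 →
      3 * (1 - μ) - (1 - μ) * rf ^ 2 - 2 * Real.sqrt (2 * μ * rf)
        ≤ Wfun μ rf α - V ^ 2) := by
  have hcs : Real.sin α ^ 2 + Real.cos α ^ 2 = 1 := Real.sin_sq_add_cos_sq α
  have hS0 : 0 ≤ Real.sqrt (2 * μ / rf) := Real.sqrt_nonneg _
  have hS2 : Real.sqrt (2 * μ / rf) ^ 2 = 2 * μ / rf := Real.sq_sqrt (by positivity)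
  set S := Real.sqrt (2 * μ / rf) with hSdef
  have hSr : Real.sqrt (2 * μ * rf) = rf * S := by
    rw [show 2 * μ * rf = (rf * S) ^ 2 from by rw [mul_pow, hS2]; field_simp]
    exact Real.sqrt_sq (by positivity)
  have hargd : (0:ℝ) < 1 + 2 * rf * Real.cos α + rf ^ 2 := by
    nlinarith [Real.neg_one_le_cos α, sq_nonneg (1 - rf)]
  have hd0 : 0 < Real.sqrt (1 + 2 * rf * Real.cos α + rf ^ 2) := Real.sqrt_pos.2 hargd
  have hdsq : Real.sqrt (1 + 2 * rf * Real.cos α + rf ^ 2) ^ 2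
      = 1 + 2 * rf * Real.cos α + rf ^ 2 := Real.sq_sqrt hargd.le
  have hargr : (rf * Real.cos α + 1 - μ + μ - 1) ^ 2 + (rf * Real.sin α) ^ 2 = rf ^ 2 := by
    linear_combination rf ^ 2 * hcs
  constructor
  · intro h
    simp only [kepE] at h
    rw [hargr, Real.sqrt_sq hrf0.le] at h
    rw [show (-V * Real.sin α - rf * Real.sin α) ^ 2
        + (V * Real.cos α + (rf * Real.cos α + 1 - μ) + μ - 1) ^ 2 = (V + rf) ^ 2 from by
      linear_combination (V + rf) ^ 2 * hcs] at h
    have h2 : (V + rf) ^ 2 ≤ S ^ 2 := by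
      rw [hS2, le_div_iff₀ hrf0]
      have h' : 1 / 2 * (V + rf) ^ 2 * rf ≤ μ :=
        (le_div_iff₀ hrf0).1 (by linarith : 1 / 2 * (V + rf) ^ 2 ≤ μ / rf)
      nlinarith [h']
    have h6 : V + rf ≤ S := le_of_sq_le_sq'' _ _ hS0 h2
    have hv2 : V ^ 2 ≤ S ^ 2 - 2 * 1 * rf * S + rf ^ 2 := by nlinarith
    have main := aux_main μ rf (Real.cos α) (Real.sin α) _ S V 1 hμ1.le hd0 hcs hdsq hS2 hv2
    simp only [Wfun]
    rw [hSr]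
    linarith [main]
  · intro h
    simp only [kepE] at h
    rw [hargr, Real.sqrt_sq hrf0.le] at h
    rw [show (V * Real.sin α - rf * Real.sin α) ^ 2
        + (-V * Real.cos α + (rf * Real.cos α + 1 - μ) + μ - 1) ^ 2 = (V - rf) ^ 2 from by
      linear_combination (V - rf) ^ 2 * hcs] at h
    have h2 : (V - rf) ^ 2 ≤ S ^ 2 := by
      rw [hS2, le_div_iff₀ hrf0]
      have h' : 1 / 2 * (V - rf) ^ 2 * rf ≤ μ :=
        (le_div_iff₀ hrf0).1 (by linarith : 1 / 2 * (V - rf) ^ 2 ≤ μ / rf)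
      nlinarith [h']
    have h6 : V - rf ≤ S := le_of_sq_le_sq'' _ _ hS0 h2
    have hv2 : V ^ 2 ≤ S ^ 2 - 2 * (-1) * rf * S + rf ^ 2 := by nlinarith
    have main := aux_main μ rf (Real.cos α) (Real.sin α) _ S V (-1) hμ1.le hd0 hcs hdsq hS2 hv2
    simp only [Wfun]
    rw [hSr]
    linarith [main]
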